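/- The plane projective curve defined by f(z₁,z₂,z₃) = z₃(z₁z₃³ + z₂⁴)² + z₁⁹ has, at the point [0:0:1] (i.e., z₁ = z₂ = 0 in the affine chart z₃ = 1), a singularity whose local equation g(z₁,z₂) = (z₁ + z₂⁴)² + z₁⁹ is, after an analytic change of coordinates, equivalent to w² − z³⁶ = 0. -/

import Mathlib

/-!
The shear `x ↦ x - y⁴` turns `g` into `x² + (x - y⁴)⁹ = A x² + 9 x y³² - y³⁶`
with `A(0) = 1`.
Completing the square, with `B² = A` and `W³⁶ = 1 + (81/4) y²⁸ / A`, the coordinates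
`x' = B x + (9/2) y³² / B` and `y' = y W` satisfy `x'² - y'³⁶ = A x² + 9 x y³² - y³⁶`.
Both coordinate changes are substitutions tangent to the identity, and every such substitution
`φ` is an automorphism: `φ - id` raises the order, so `φ` is injective, and the iteration
`gₙ₊₁ = gₙ + (h - φ gₙ)` converges to a preimage of `h`.
-/

open MvPowerSeries

theorem PowerSeries.binomialSeries_pow {R A : Type*} [CommRing R] [BinomialRing R] [Ring A]
    [Algebra R A] (r : R) (n : ℕ) : binomialSeries A r ^ n = binomialSeries A (n * r) := by
  induction n with
  | zero => simp
  | succ n ih => rw [pow_succ, ih, ← binomialSeries_add]; push_cast; ring_nf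

namespace MvPowerSeries

variable {σ R : Type*} [CommRing R]

theorem le_order_of_le_order_sub {n : ℕ∞} {p q : MvPowerSeries σ R} (hq : n ≤ q.order)
    (hpq : n ≤ (p - q).order) : n ≤ p.order :=
  calc n ≤ min q.order (p - q).order := le_min hq hpq
    _ ≤ (q + (p - q)).order := min_order_le_add
    _ = p.order := by rw [add_sub_cancel]

theorem eq_zero_of_forall_natCast_le_order {f : MvPowerSeries σ R}
    (hf : ∀ n : ℕ, (n : ℕ∞) ≤ f.order) : f = 0 :=
  order_eq_top_iff.mp (top_le_iff.mp (ENat.forall_natCast_le_iff_le.mp fun n _ => hf n))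

theorem exists_le_order_sub_of_le_order_succ_sub {g : ℕ → MvPowerSeries σ R}
    (hg : ∀ n : ℕ, (n : ℕ∞) ≤ (g (n + 1) - g n).order) :
    ∃ G : MvPowerSeries σ R, ∀ m : ℕ, (m : ℕ∞) ≤ (G - g m).order := by
  have hmono : ∀ m n : ℕ, m ≤ n → (m : ℕ∞) ≤ (g n - g m).order := by
    intro m n hmn
    induction n, hmn using Nat.le_induction with
    | base => simp
    | succ n hmn ih =>
      calc (m : ℕ∞) ≤ min (g (n + 1) - g n).order (g n - g m).order :=
            le_min ((Nat.cast_le.mpr hmn).trans (hg n)) ih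
        _ ≤ _ := by rw [← sub_add_sub_cancel (g (n + 1)) (g n) (g m)]; exact min_order_le_add
  let G : MvPowerSeries σ R := fun d => coeff d (g (d.degree + 1))
  refine ⟨G, fun m => le_order fun d hd => ?_⟩
  have hdm : d.degree + 1 ≤ m := by exact_mod_cast Order.add_one_le_of_lt hd
  show coeff d (g (d.degree + 1) - g m) = 0
  rw [← neg_sub, map_neg, neg_eq_zero]
  exact coeff_of_lt_order ((Nat.cast_lt.mpr d.degree.lt_add_one).trans_le (hmono _ _ hdm))

theorem bijective_of_le_order_sub (φ : MvPowerSeries σ R →+ MvPowerSeries σ R)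
    (hφ : ∀ f, f.order + 1 ≤ (φ f - f).order) : Function.Bijective φ := by
  refine ⟨(injective_iff_map_eq_zero φ).mpr fun f hf => ?_, fun h => ?_⟩
  · have hf' := hφ f
    rw [hf, zero_sub, order_neg] at hf'
    by_contra hf0
    exact ((ENat.add_one_le_iff (by simpa using hf0)).mp hf').false
  · let g : ℕ → MvPowerSeries σ R := fun n => Nat.rec 0 (fun _ g => g + (h - φ g)) n
    have hres : ∀ n : ℕ, (n : ℕ∞) ≤ (h - φ (g n)).order := by
      intro n
      induction n with
      | zero => simp
      | succ n ih =>
        have e : h - φ (g (n + 1)) = -(φ (h - φ (g n)) - (h - φ (g n))) := by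
          simp only [g, map_add]; abel
        rw [e, order_neg, Nat.cast_succ]
        exact (add_le_add ih le_rfl).trans (hφ _)
    obtain ⟨G, hG⟩ := exists_le_order_sub_of_le_order_succ_sub (g := g) fun n => by
      simpa [g] using hres n
    refine ⟨G, (sub_eq_zero.mp (eq_zero_of_forall_natCast_le_order fun m => ?_)).symm⟩
    have hφG : (m : ℕ∞) ≤ (-φ (G - g m)).order := by
      rw [order_neg]
      exact le_order_of_le_order_sub (hG m) ((hG m).trans (le_self_add.trans (hφ _)))
    have e : h - φ G = (h - φ (g m)) + -φ (G - g m) := by rw [map_sub]; abel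
    rw [e]
    exact (le_min (hres m) hφG).trans min_order_le_add

theorem one_le_order_X (i : σ) : 1 ≤ (X i : MvPowerSeries σ R).order :=
  one_le_order_iff_constCoeff_eq_zero.mpr (constantCoeff_X i)

theorem two_le_order_X_mul {f : MvPowerSeries σ R} (hf : constantCoeff f = 0) (i : σ) :
    2 ≤ (X i * f).order :=
  (add_le_add (one_le_order_X i) (one_le_order_iff_constCoeff_eq_zero.mpr hf)).trans le_order_mul

theorem le_order_X_pow_mul (f : MvPowerSeries σ R) (i : σ) (k : ℕ) :
    (k : ℕ∞) ≤ (X i ^ k * f).order :=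
  (le_self_add.trans (add_le_add (le_order_pow_of_constantCoeff_eq_zero k (constantCoeff_X i))
    le_rfl)).trans le_order_mul

theorem constantCoeff_eq_zero_of_two_le_order_sub_X {p : MvPowerSeries σ R} {i : σ}
    (h : 2 ≤ (p - X i).order) : constantCoeff p = 0 :=
  one_le_order_iff_constCoeff_eq_zero.mp
    (le_order_of_le_order_sub (one_le_order_X i) (le_trans (by norm_num) h))

theorem hasSubst_of_two_le_order_sub_X [Finite σ] {a : σ → MvPowerSeries σ R}
    (ha : ∀ i, 2 ≤ (a i - X i).order) : HasSubst a :=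
  hasSubst_of_constantCoeff_zero fun i => constantCoeff_eq_zero_of_two_le_order_sub_X (ha i)

theorem add_one_le_order_prod_sub_prod {ι : Type*} (s : Finset ι) {p q : ι → MvPowerSeries σ R}
    {n : ι → ℕ∞} (hq : ∀ i ∈ s, n i ≤ (q i).order) (hpq : ∀ i ∈ s, n i + 1 ≤ (p i - q i).order) :
    (∑ i ∈ s, n i) + 1 ≤ (∏ i ∈ s, p i - ∏ i ∈ s, q i).order := by
  classical
  induction s using Finset.induction_on with
  | empty => simp
  | insert a s ha ih =>
    simp only [Finset.mem_insert, forall_eq_or_imp] at hq hpq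
    have ih := ih hq.2 hpq.2
    have hqs : ∑ i ∈ s, n i ≤ (∏ i ∈ s, q i).order :=
      (Finset.sum_le_sum hq.2).trans (le_order_prod _ _)
    have hps : ∑ i ∈ s, n i ≤ (∏ i ∈ s, p i).order :=
      le_order_of_le_order_sub hqs (le_self_add.trans ih)
    have e : ∏ i ∈ insert a s, p i - ∏ i ∈ insert a s, q i
        = (p a - q a) * ∏ i ∈ s, p i + q a * (∏ i ∈ s, p i - ∏ i ∈ s, q i) := by
      rw [Finset.prod_insert ha, Finset.prod_insert ha]; ring
    rw [e, Finset.sum_insert ha]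
    calc n a + ∑ i ∈ s, n i + 1
        ≤ min (n a + 1 + ∑ i ∈ s, n i) (n a + (∑ i ∈ s, n i + 1)) :=
          le_min (by rw [add_right_comm]) (by rw [add_assoc])
      _ ≤ _ := (min_le_min ((add_le_add hpq.1 hps).trans le_order_mul)
          ((add_le_add hq.1 ih).trans le_order_mul)).trans min_order_le_add

theorem degree_add_one_le_order_prod_pow_sub {a : σ → MvPowerSeries σ R}
    (ha : ∀ i, 2 ≤ (a i - X i).order) (e : σ →₀ ℕ) :
    (e.degree : ℕ∞) + 1 ≤ ((e.prod fun s k => a s ^ k) - e.prod fun s k => X s ^ k).order := by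
  have hpow : ∀ i (k : ℕ), (k : ℕ∞) + 1 ≤ (a i ^ k - X i ^ k).order := fun i k => by
    simpa [Finset.prod_const] using add_one_le_order_prod_sub_prod (Finset.range k)
      (p := fun _ => a i) (q := fun _ => X i) (n := fun _ => 1)
      (fun _ _ => one_le_order_X i) (fun _ _ => by simpa [one_add_one_eq_two] using ha i)
  simpa [Finsupp.degree_apply, Finsupp.prod] using
    add_one_le_order_prod_sub_prod e.support (p := fun s => a s ^ e s)
      (q := fun s => X s ^ e s) (n := fun s => (e s : ℕ∞))
      (fun s _ => le_order_pow_of_constantCoeff_eq_zero (e s) (constantCoeff_X s))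
      (fun s _ => hpow s (e s))

theorem add_one_le_order_subst_sub [Finite σ] {a : σ → MvPowerSeries σ R}
    (ha : ∀ i, 2 ≤ (a i - X i).order) (f : MvPowerSeries σ R) :
    f.order + 1 ≤ (subst a f - f).order := by
  have hsubst := hasSubst_of_two_le_order_sub_X ha
  refine le_order fun d hd => ?_
  rw [show subst a f - f = subst a f - subst X f by rw [subst_self, id], map_sub,
    coeff_subst hsubst, coeff_subst HasSubst.X, ← finsum_sub_distrib
    (coeff_subst_finite hsubst f d) (coeff_subst_finite HasSubst.X f d)]
  refine finsum_eq_zero_of_forall_eq_zero fun e => ?_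
  rw [← smul_sub, ← map_sub]
  rcases lt_or_ge (e.degree : ℕ∞) f.order with he | he
  · rw [coeff_of_lt_order he, zero_smul]
  · have hlt := hd.trans_le ((add_le_add he le_rfl).trans
      (degree_add_one_le_order_prod_pow_sub ha e))
    rw [coeff_of_lt_order hlt, smul_zero]

noncomputable def substAlgEquiv [Finite σ] (a : σ → MvPowerSeries σ R)
    (ha : ∀ i, 2 ≤ (a i - X i).order) : MvPowerSeries σ R ≃ₐ[R] MvPowerSeries σ R :=
  AlgEquiv.ofBijective (substAlgHom (hasSubst_of_two_le_order_sub_X ha)) <|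
    bijective_of_le_order_sub (substAlgHom (hasSubst_of_two_le_order_sub_X ha)).toAddMonoidHom
      fun f => by
        simpa [coe_substAlgHom] using add_one_le_order_subst_sub ha f

theorem substAlgEquiv_X [Finite σ] {a : σ → MvPowerSeries σ R}
    (ha : ∀ i, 2 ≤ (a i - X i).order) (i : σ) : substAlgEquiv a ha (X i) = a i := by
  simp [substAlgEquiv, subst_X (hasSubst_of_two_le_order_sub_X ha)]

theorem exists_pow_eq_and_constantCoeff_eq_one [Algebra ℚ R] {u : MvPowerSeries σ R}
    (hu : constantCoeff u = 1) {n : ℕ} (hn : n ≠ 0) :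
    ∃ v : MvPowerSeries σ R, v ^ n = u ∧ constantCoeff v = 1 := by
  have hu1 : constantCoeff (u - 1) = 0 := by rw [map_sub, hu, map_one, sub_self]
  have hsubst := PowerSeries.HasSubst.of_constantCoeff_zero hu1
  let F := PowerSeries.binomialSeries R (n⁻¹ : ℚ)
  have hF : F ^ n = 1 + PowerSeries.X := by
    rw [PowerSeries.binomialSeries_pow, mul_inv_cancel₀ (Nat.cast_ne_zero.mpr hn),
      ← Nat.cast_one, PowerSeries.binomialSeries_nat, pow_one]
  refine ⟨PowerSeries.substAlgHom hsubst F, ?_, ?_⟩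
  · rw [← map_pow, hF, map_add, map_one, PowerSeries.substAlgHom_X, add_sub_cancel]
  · have h := PowerSeries.constantCoeff_subst_eq_zero hu1 (F - 1) (by simp [F])
    rwa [← PowerSeries.coe_substAlgHom hsubst, map_sub, map_one, map_sub, map_one,
      sub_eq_zero] at h

theorem exists_algEquiv_apply_X_zero_sq_sub_X_one_pow {K : Type*} [Field K] [CharZero K]
    {A : MvPowerSeries (Fin 2) K} (hA : constantCoeff A = 1) (β : MvPowerSeries (Fin 2) K)
    {k m : ℕ} (hk : 2 ≤ k) (hm : m ≠ 0) (hmk : m < 2 * k) :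
    ∃ θ : MvPowerSeries (Fin 2) K ≃ₐ[K] MvPowerSeries (Fin 2) K,
      θ (X 0 ^ 2 - X 1 ^ m) = A * X 0 ^ 2 + 2 * β * X 0 * X 1 ^ k - X 1 ^ m := by
  obtain ⟨B, hB, hB1⟩ := exists_pow_eq_and_constantCoeff_eq_one hA two_ne_zero
  have hBinv : B * B⁻¹ = 1 := MvPowerSeries.mul_inv_cancel B (by simp [hB1])
  obtain ⟨W, hW, hW1⟩ := exists_pow_eq_and_constantCoeff_eq_one
    (u := 1 + β ^ 2 * X 1 ^ (2 * k - m) * B⁻¹ ^ 2)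
    (by simp [zero_pow (by omega : 2 * k - m ≠ 0)]) hm
  have hP : 2 ≤ (B * X 0 + β * X 1 ^ k * B⁻¹ - X 0).order := by
    have e : B * X 0 + β * X 1 ^ k * B⁻¹ - X 0 = X 0 * (B - 1) + X 1 ^ k * (β * B⁻¹) := by ring
    rw [e]
    exact (le_min (two_le_order_X_mul (by simp [hB1]) 0)
      ((Nat.cast_le.mpr hk).trans (le_order_X_pow_mul _ 1 k))).trans min_order_le_add
  have hQ : 2 ≤ (X 1 * W - X 1).order := by
    rw [← mul_sub_one]; exact two_le_order_X_mul (by simp [hW1]) 1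
  let a : Fin 2 → MvPowerSeries (Fin 2) K := ![B * X 0 + β * X 1 ^ k * B⁻¹, X 1 * W]
  refine ⟨substAlgEquiv a (Fin.forall_fin_two.mpr ⟨hP, hQ⟩), ?_⟩
  have hy : (X 1 : MvPowerSeries (Fin 2) K) ^ (2 * k) = X 1 ^ (2 * k - m) * X 1 ^ m := by
    rw [← pow_add, Nat.sub_add_cancel hmk.le]
  simp only [map_sub, map_pow, substAlgEquiv_X, a, Matrix.cons_val_zero, Matrix.cons_val_one]
  linear_combination X 0 ^ 2 * hB - X 1 ^ m * hW + β ^ 2 * B⁻¹ ^ 2 * hy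
    + 2 * β * X 0 * X 1 ^ k * hBinv

end MvPowerSeries

theorem exists_X_zero_sq_add_pow_nine_eq :
    ∃ A : MvPowerSeries (Fin 2) ℂ, constantCoeff A = 1 ∧
      X 0 ^ 2 + (X 0 - X 1 ^ 4) ^ 9 = A * X 0 ^ 2 + 2 * C (9 / 2) * X 0 * X 1 ^ 32 - X 1 ^ 36 := by
  -- `A` collects the terms of `(x - y⁴)⁹` divisible by `x²`.
  refine ⟨1 - 36 * X 1 ^ 28 + 84 * X 0 * X 1 ^ 24 - 126 * X 0 ^ 2 * X 1 ^ 20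
      + 126 * X 0 ^ 3 * X 1 ^ 16 - 84 * X 0 ^ 4 * X 1 ^ 12 + 36 * X 0 ^ 5 * X 1 ^ 8
      - 9 * X 0 ^ 6 * X 1 ^ 4 + X 0 ^ 7, by simp, ?_⟩
  have h9 : (2 : MvPowerSeries (Fin 2) ℂ) * C (9 / 2) = 9 := by
    rw [← map_ofNat C 2, ← map_mul, ← map_ofNat C 9]; norm_num
  linear_combination (-(X 0 : MvPowerSeries (Fin 2) ℂ) * X 1 ^ 32) * h9

/-- The plane projective curve `f(z₁,z₂,z₃) = z₃(z₁z₃³ + z₂⁴)² + z₁⁹ = 0` has at the point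
`z₁ = z₂ = 0` of the affine chart `z₃ = 1` the local equation
`g(z₁,z₂) = (z₁ + z₂⁴)² + z₁⁹`, and `g` is, after an analytic change of coordinates (an
automorphism of `ℂ⟦z₁,z₂⟧`), equivalent to the equation `w² − z³⁶ = 0` (the two equations
generate the same ideal). -/
theorem cone_example_singularity_A35 :
    (∀ z₁ z₂ : ℂ, (1 : ℂ) * (z₁ * 1 ^ 3 + z₂ ^ 4) ^ 2 + z₁ ^ 9
        = (z₁ + z₂ ^ 4) ^ 2 + z₁ ^ 9) ∧
    ∃ φ : MvPowerSeries (Fin 2) ℂ ≃+* MvPowerSeries (Fin 2) ℂ,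
      Ideal.span {φ ((X 0 + X 1 ^ 4) ^ 2 + X 0 ^ 9)} =
        Ideal.span {(X 0 : MvPowerSeries (Fin 2) ℂ) ^ 2 - X 1 ^ 36} := by
  refine ⟨fun z₁ z₂ => by ring, ?_⟩
  have hshear : ∀ i, 2 ≤ (![X 0 - X 1 ^ 4, X 1] i - X i : MvPowerSeries (Fin 2) ℂ).order := by
    refine Fin.forall_fin_two.mpr ⟨?_, by simp⟩
    simpa using (show (2 : ℕ∞) ≤ 4 by norm_num).trans
      (le_order_X_pow_mul (1 : MvPowerSeries (Fin 2) ℂ) 1 4)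
  let shear := substAlgEquiv _ hshear
  obtain ⟨A, hA, hAeq⟩ := exists_X_zero_sq_add_pow_nine_eq
  obtain ⟨θ, hθ⟩ := exists_algEquiv_apply_X_zero_sq_sub_X_one_pow hA (C (9 / 2))
    (k := 32) (m := 36) (by norm_num) (by norm_num) (by norm_num)
  have hg : shear ((X 0 + X 1 ^ 4) ^ 2 + X 0 ^ 9) = θ (X 0 ^ 2 - X 1 ^ 36) := by
    simp only [hθ, ← hAeq, map_add, map_pow, shear, substAlgEquiv_X, Matrix.cons_val_zero,
      Matrix.cons_val_one]
    ring
  refine ⟨(shear.trans θ.symm).toRingEquiv, ?_⟩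
  rw [AlgEquiv.coe_ringEquiv, AlgEquiv.trans_apply, hg, AlgEquiv.symm_apply_apply]
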